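/- arXiv:math/0211468 — 2 statements merged into one kernel-verified Lean document; each statement's English description precedes it below -/
import Mathlib

section
/- For p prime and p ∤ m, there is a ring isomorphism Z[ζ_m] ⊗_Z Z[ζ_p] ≅ Z[ζ_{mp}]. -/
/-!
Choose embeddings of `L = ℚ(ζ_m)` and `M = ℚ(ζ_n)` into `K = ℚ(ζ_{mn})`, `m` and `n` coprime.
The induced ring map `𝓞 L ⊗[ℤ] 𝓞 M → 𝓞 K` hits a primitive `m`-th and a primitive `n`-th root
of unity, hence generates a primitive `mn`-th root of unity `ζ`; as `𝓞 K = ℤ[ζ]`, it is surjective.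
Both sides are free `ℤ`-modules of rank `φ(m) φ(n) = φ(mn)`, and a surjection between free modules
of the same finite rank over `ℤ` is bijective.
-/

open NumberField TensorProduct Polynomial Algebra.TensorProduct

namespace IsCyclotomicExtension.Rat

variable {K L M : Type*} [Field K] [CharZero K] [Field L] [CharZero L] [Field M] [CharZero M]

theorem nonempty_algHom_of_isPrimitiveRoot {n : ℕ} [NeZero n] [IsCyclotomicExtension {n} ℚ L]
    {η : K} (hη : IsPrimitiveRoot η n) : Nonempty (L →ₐ[ℚ] K) :=
  ⟨((zeta_spec n ℚ L).embeddingsEquivPrimitiveRoots K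
    (cyclotomic.irreducible_rat (NeZero.pos n))).symm ⟨η, (mem_primitiveRoots (NeZero.pos n)).2 hη⟩⟩

section Coprime

variable {m n : ℕ} [NeZero m] [NeZero n]
  [IsCyclotomicExtension {m} ℚ L] [IsCyclotomicExtension {n} ℚ M]
  [IsCyclotomicExtension {m * n} ℚ K]

theorem productMap_ringOfIntegers_surjective (hmn : m.Coprime n) (ψL : L →ₐ[ℚ] K)
    (ψM : M →ₐ[ℚ] K) :
    Function.Surjective (productMap (RingOfIntegers.mapRingHom (ψL : L →+* K)).toIntAlgHom
      (RingOfIntegers.mapRingHom (ψM : M →+* K)).toIntAlgHom) := by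
  set fL := (RingOfIntegers.mapRingHom (ψL : L →+* K)).toIntAlgHom
  set fM := (RingOfIntegers.mapRingHom (ψM : M →+* K)).toIntAlgHom
  have hL : IsPrimitiveRoot (fL (zeta_spec m ℚ L).toInteger) m :=
    (zeta_spec m ℚ L).toInteger_isPrimitiveRoot.map_of_injective
      fun x y h => RingOfIntegers.ext (ψL.injective congr($h))
  have hM : IsPrimitiveRoot (fM (zeta_spec n ℚ M).toInteger) n :=
    (zeta_spec n ℚ M).toInteger_isPrimitiveRoot.map_of_injective
      fun x y h => RingOfIntegers.ext (ψM.injective congr($h))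
  have hK := zeta_spec (m * n) ℚ K
  rw [← AlgHom.range_eq_top, productMap_range, eq_top_iff, ← adjoin_singleton_eq_top hK,
    ← IsPrimitiveRoot.adjoin_pair_eq ℤ hL hM (NeZero.ne m) (NeZero.ne n)
      (by rw [hmn.lcm_eq_mul]; exact hK.toInteger_isPrimitiveRoot),
    Algebra.adjoin_le_iff, Set.pair_subset_iff]
  exact ⟨Algebra.mem_sup_left ⟨_, rfl⟩, Algebra.mem_sup_right ⟨_, rfl⟩⟩

theorem finrank_ringOfIntegers_tensorProduct (hmn : m.Coprime n) :
    Module.finrank ℤ (𝓞 L ⊗[ℤ] 𝓞 M) = Module.finrank ℤ (𝓞 K) := by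
  have := numberField {m} ℚ L
  have := numberField {n} ℚ M
  have := numberField {m * n} ℚ K
  refine (Module.finrank_tensorProduct (R := ℤ) (S := ℤ)).trans ?_
  rw [RingOfIntegers.rank, RingOfIntegers.rank, RingOfIntegers.rank,
    finrank m L, finrank n M, finrank (m * n) K, Nat.totient_mul hmn]

theorem nonempty_ringOfIntegers_tensorProduct_ringEquiv (hmn : m.Coprime n) :
    Nonempty ((𝓞 L ⊗[ℤ] 𝓞 M) ≃+* 𝓞 K) := by
  have := numberField {m} ℚ L
  have := numberField {n} ℚ M
  have := numberField {m * n} ℚ K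
  have hζ := zeta_spec (m * n) ℚ K
  obtain ⟨ψL⟩ := nonempty_algHom_of_isPrimitiveRoot (L := L) (hζ.pow (NeZero.pos _) (mul_comm m n))
  obtain ⟨ψM⟩ := nonempty_algHom_of_isPrimitiveRoot (L := M) (hζ.pow (NeZero.pos _) rfl)
  let φ := productMap (RingOfIntegers.mapRingHom (ψL : L →+* K)).toIntAlgHom
    (RingOfIntegers.mapRingHom (ψM : M →+* K)).toIntAlgHom
  exact ⟨RingEquiv.ofBijective φ (OrzechProperty.bijective_of_surjective_of_finrank_le
    φ.toLinearMap (productMap_ringOfIntegers_surjective hmn ψL ψM)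
    (finrank_ringOfIntegers_tensorProduct hmn).le)⟩

end Coprime

end IsCyclotomicExtension.Rat

/-- For `p` prime not dividing `m`, `ℤ[ζ_m] ⊗_ℤ ℤ[ζ_p] ≅ ℤ[ζ_{mp}]`. -/
theorem stmt_6 (m p : ℕ+) (hp : (p : ℕ).Prime) (hpm : ¬ (p : ℕ) ∣ (m : ℕ))
    (K L M : Type*) [Field K] [CharZero K] [Field L] [CharZero L]
    [Field M] [CharZero M]
    [IsCyclotomicExtension {((m * p : ℕ+) : ℕ)} ℚ K] [IsCyclotomicExtension {(m : ℕ)} ℚ L]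
    [IsCyclotomicExtension {(p : ℕ)} ℚ M] :
    Nonempty ((𝓞 L ⊗[ℤ] 𝓞 M) ≃+* 𝓞 K) := by
  have : IsCyclotomicExtension {(m : ℕ) * p} ℚ K := by rw [← PNat.mul_coe]; infer_instance
  exact IsCyclotomicExtension.Rat.nonempty_ringOfIntegers_tensorProduct_ringEquiv
    (hp.coprime_iff_not_dvd.2 hpm).symm
end

section
/- Let ζ = ζ_{mp} with p prime, p ∤ m, and I = (1 − ζ^m). Then for integers a, a', ζ^a ≡ ζ^{a'} mod I if and only if a ≡ a' (mod m). -/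
/-!
Modulo `I = (ζ ^ m - 1)` the image of `ζ` has order exactly `m`. Certainly `ζ ^ m ≡ 1`. If
`ζ ^ (m / q) ≡ 1` for a prime `q ∣ m`, then, as `(ζ ^ (m / q)) ^ p` is a primitive `q`-th root of
unity, `ζ ^ (m / q) - 1` divides `q`, so `I` contains the coprime integers `p` and `q` and is the
unit ideal. But `ζ ^ m - 1` is not a unit: its `(p - 1)`-st power is associated to `p`.
-/

open NumberField

theorem isUnit_algebraMap_iff_of_isIntegral {R S : Type*} [CommRing R] [CommRing S] [Algebra R S]
    [Algebra.IsIntegral R S] [FaithfulSMul R S] {r : R} :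
    IsUnit (algebraMap R S r) ↔ IsUnit r := by
  rw [← Ideal.span_singleton_eq_top, ← Ideal.span_singleton_eq_top, ← Set.image_singleton,
    ← Ideal.map_span]
  exact Ideal.map_eq_top_iff _ (FaithfulSMul.algebraMap_injective R S)
    (algebraMap_isIntegral_iff.mpr inferInstance)

theorem NumberField.RingOfIntegers.not_isUnit_natCast {K : Type*} [Field K] [CharZero K] {n : ℕ}
    (hn : n ≠ 1) : ¬ IsUnit (n : 𝓞 K) := by
  rwa [← map_natCast (algebraMap ℤ (𝓞 K)), isUnit_algebraMap_iff_of_isIntegral, Int.ofNat_isUnit,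
    Nat.isUnit_iff]

theorem IsPrimitiveRoot.not_isUnit_sub_one_of_prime {K : Type*} [Field K] [CharZero K] {p : ℕ}
    {η : 𝓞 K} (hη : IsPrimitiveRoot η p) (hp : p.Prime) : ¬ IsUnit (η - 1) := by
  intro h
  have : Fact p.Prime := ⟨hp⟩
  have hη' : IsPrimitiveRoot (η : K) p :=
    hη.map_of_injective (FaithfulSMul.algebraMap_injective (𝓞 K) K)
  exact RingOfIntegers.not_isUnit_natCast hp.ne_one <|
    (IsCyclotomicExtension.Rat.associated_zeta_sub_one_pow_prime p hη').isUnit_iff.mp (h.pow _)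

theorem IsPrimitiveRoot.sub_one_dvd_natCast_of_pow {A : Type*} [CommRing A] [IsDomain A] {x : A}
    {j q : ℕ} (hx : IsPrimitiveRoot (x ^ j) q) (hq : 1 < q) : x - 1 ∣ (q : A) :=
  (sub_one_dvd_pow_sub_one x j).trans (hx.sub_one_dvd_natCast hq)

theorem IsPrimitiveRoot.orderOf_mk_span_pow_sub_one {A : Type*} [CommRing A] [IsDomain A] {ζ : A}
    {m p : ℕ} (hm : 0 < m) (hp : p.Prime) (hpm : ¬ p ∣ m) (hζ : IsPrimitiveRoot ζ (m * p))
    (hζm : ¬ IsUnit (ζ ^ m - 1)) :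
    orderOf (Ideal.Quotient.mk (Ideal.span {ζ ^ m - 1}) ζ) = m := by
  have hmp : 0 < m * p := Nat.mul_pos hm hp.pos
  refine orderOf_eq_of_pow_and_pow_div_prime hm ?_ fun q hq hqm hpow ↦ ?_
  · rw [← map_pow, Ideal.Quotient.mk_eq_one_iff_sub_mem]
    exact Ideal.mem_span_singleton_self _
  · rw [← map_pow, Ideal.Quotient.mk_eq_one_iff_sub_mem, Ideal.mem_span_singleton] at hpow
    have hdvd_p : ζ ^ m - 1 ∣ (p : A) := (hζ.pow hmp rfl).sub_one_dvd_natCast hp.one_lt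
    have hζq : IsPrimitiveRoot ((ζ ^ (m / q)) ^ p) q := by
      rw [← pow_mul]
      exact hζ.pow hmp (by rw [Nat.mul_right_comm, Nat.div_mul_cancel hqm])
    have hdvd_q : ζ ^ m - 1 ∣ (q : A) := hpow.trans (hζq.sub_one_dvd_natCast_of_pow hq.one_lt)
    have hcop : IsCoprime (p : A) q := by
      simpa only [map_natCast] using
        ((Nat.coprime_primes hp hq).mpr fun h ↦ hpm (h ▸ hqm)).isCoprime.map (Int.castRingHom A)
    exact hζm (hcop.isUnit_of_dvd' hdvd_p hdvd_q)

theorem stmt_12_general (m p : ℕ+) (hp : (p : ℕ).Prime) (hpm : ¬ (p : ℕ) ∣ (m : ℕ))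
    (K : Type*) [Field K] [CharZero K]
    (ζ : 𝓞 K) (hζ : IsPrimitiveRoot ζ ((m : ℕ) * (p : ℕ))) (a a' : ℕ) :
    ζ ^ a - ζ ^ a' ∈ Ideal.span {1 - ζ ^ (m : ℕ)} ↔ a ≡ a' [MOD (m : ℕ)] := by
  have hη : IsPrimitiveRoot (ζ ^ (m : ℕ)) p := hζ.pow (Nat.mul_pos m.pos p.pos) rfl
  have horder := hζ.orderOf_mk_span_pow_sub_one m.pos hp hpm (hη.not_isUnit_sub_one_of_prime hp)
  have hfin : IsOfFinOrder (Ideal.Quotient.mk (Ideal.span {ζ ^ (m : ℕ) - 1}) ζ) :=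
    orderOf_pos_iff.mp (horder.symm ▸ m.pos)
  rw [← neg_sub, Ideal.span_singleton_neg, ← Ideal.Quotient.mk_eq_mk_iff_sub_mem, map_pow,
    map_pow, hfin.pow_eq_pow_iff_modEq, horder]

/-- For `ζ = ζ_{mp}` with `p` prime, `p ∤ m`, and `I = (1 - ζ^m)`:
`ζ^a ≡ ζ^{a'} mod I` iff `a ≡ a' (mod m)`. -/
theorem stmt_12 (m p : ℕ+) (hp : (p : ℕ).Prime) (hpm : ¬ (p : ℕ) ∣ (m : ℕ))
    (K : Type*) [Field K] [CharZero K] [IsCyclotomicExtension {((m * p : ℕ+) : ℕ)} ℚ K]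
    (ζ : 𝓞 K) (hζ : IsPrimitiveRoot ζ ((m : ℕ) * (p : ℕ))) (a a' : ℕ) :
    ζ ^ a - ζ ^ a' ∈ Ideal.span {1 - ζ ^ (m : ℕ)} ↔ a ≡ a' [MOD (m : ℕ)] :=
  stmt_12_general m p hp hpm K ζ hζ a a'
end
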